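/- arXiv:math/0701572 — 2 statements merged into one kernel-verified Lean document; each statement's English description precedes it below -/
import Mathlib

section
/- Let ν be a nonzero complex number and S the Möbius transformation given by the matrix [[ν, 0],[ν⁻¹, ν⁻¹]]. Let C₁ = {z : |z - α| = r} with r > 0 and r ≠ |1 + α|. Then S maps C₁ onto the circle C₂ = {z : |z - β| = ρ} where β = ν²(r² - α - |α|²)/(r² - |1+α|²) and ρ = r|ν|²/|r² - |1+α|²|. Moreover S maps the exterior of C₁ to the interior of C₂ if and only if |α + 1| < r. -/
/-!
Put `e = r² - |1 + α|²`. Clearing denominators gives, for `z ≠ -1`, the identity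
`|S z - β|² - ρ² = -|ν|⁴ (|z - α|² - r²) / (e |z + 1|²)`,
so the power of `S z` with respect to `C₂` is the power of `z` with respect to `C₁` times a
factor of the sign of `-e`. Hence `z ∈ C₁ ↔ S z ∈ C₂`, and points outside `C₁`
go inside `C₂` exactly when `e > 0`. For surjectivity, `S` is a bijection from `ℂ ∖ {-1}` onto
`ℂ ∖ {ν²}`, and `ν² = S ∞` is not on `C₂` since `|ν² - β| = |ν|² |1 + α| / |e|` and `|1 + α| ≠ r`.
-/

open Complex ComplexConjugate

noncomputable def imageCenter (ν α : ℂ) (r : ℝ) : ℂ :=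
  ν ^ 2 * ((r : ℂ) ^ 2 - α - (‖α‖ : ℂ) ^ 2) / ((r : ℂ) ^ 2 - (‖1 + α‖ : ℂ) ^ 2)

noncomputable def imageRadius (ν α : ℂ) (r : ℝ) : ℝ :=
  r * ‖ν‖ ^ 2 / |r ^ 2 - ‖1 + α‖ ^ 2|

theorem norm_ofReal_sq_sub_ofReal_sq (a b : ℝ) : ‖(a : ℂ) ^ 2 - (b : ℂ) ^ 2‖ = |a ^ 2 - b ^ 2| := by
  rw [← ofReal_pow, ← ofReal_pow, ← ofReal_sub, norm_real, Real.norm_eq_abs]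

theorem norm_sq_mul_sub_mul_sub_sq_mul (z α : ℂ) (r : ℝ) :
    ‖z * ((r : ℂ) ^ 2 - (‖1 + α‖ : ℂ) ^ 2) - ((r : ℂ) ^ 2 - α - (‖α‖ : ℂ) ^ 2) * (z + 1)‖ ^ 2
        - r ^ 2 * ‖z + 1‖ ^ 2 =
      -(r ^ 2 - ‖1 + α‖ ^ 2) * (‖z - α‖ ^ 2 - r ^ 2) := by
  apply ofReal_injective
  push_cast
  simp only [← mul_conj', map_sub, map_add, map_mul, map_pow, map_one, conj_ofReal, conj_conj]
  ring

theorem mobius_sub_imageCenter (ν α z : ℂ) (r : ℝ) (hz : z + 1 ≠ 0)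
    (he : r ^ 2 - ‖1 + α‖ ^ 2 ≠ 0) :
    ν ^ 2 * z / (z + 1) - imageCenter ν α r =
      ν ^ 2 * (z * ((r : ℂ) ^ 2 - (‖1 + α‖ : ℂ) ^ 2) - ((r : ℂ) ^ 2 - α - (‖α‖ : ℂ) ^ 2) * (z + 1))
        / ((z + 1) * ((r : ℂ) ^ 2 - (‖1 + α‖ : ℂ) ^ 2)) := by
  have he' : (r : ℂ) ^ 2 - (‖1 + α‖ : ℂ) ^ 2 ≠ 0 := by exact_mod_cast he
  rw [imageCenter]
  field_simp

theorem norm_mobius_sub_imageCenter_sq_sub_sq (ν α z : ℂ) (r : ℝ) (hz : z + 1 ≠ 0)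
    (he : r ^ 2 - ‖1 + α‖ ^ 2 ≠ 0) :
    ‖ν ^ 2 * z / (z + 1) - imageCenter ν α r‖ ^ 2 - imageRadius ν α r ^ 2 =
      -‖ν‖ ^ 4 * (‖z - α‖ ^ 2 - r ^ 2) / ((r ^ 2 - ‖1 + α‖ ^ 2) * ‖z + 1‖ ^ 2) := by
  have hz' : ‖z + 1‖ ≠ 0 := norm_ne_zero_iff.2 hz
  rw [mobius_sub_imageCenter ν α z r hz he, imageRadius, norm_div, norm_mul, norm_mul, norm_pow,
    norm_ofReal_sq_sub_ofReal_sq]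
  have key := norm_sq_mul_sub_mul_sub_sq_mul z α r
  field_simp
  rw [sq_abs]
  linear_combination ‖ν‖ ^ 4 * (r ^ 2 - ‖1 + α‖ ^ 2) * key

theorem imageRadius_nonneg (ν α : ℂ) (r : ℝ) (hr : 0 ≤ r) : 0 ≤ imageRadius ν α r := by
  unfold imageRadius; positivity

theorem norm_mobius_sub_imageCenter_eq_iff {ν α z : ℂ} {r : ℝ} (hν : ν ≠ 0) (hr : 0 ≤ r)
    (hz : z + 1 ≠ 0) (he : r ^ 2 - ‖1 + α‖ ^ 2 ≠ 0) :
    ‖ν ^ 2 * z / (z + 1) - imageCenter ν α r‖ = imageRadius ν α r ↔ ‖z - α‖ = r := by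
  rw [← sq_eq_sq₀ (norm_nonneg _) (imageRadius_nonneg ν α r hr), ← sub_eq_zero,
    norm_mobius_sub_imageCenter_sq_sub_sq ν α z r hz he, ← sq_eq_sq₀ (norm_nonneg _) hr,
    ← sub_eq_zero (a := ‖z - α‖ ^ 2)]
  have : ‖ν‖ ^ 4 ≠ 0 := by positivity
  have : ‖z + 1‖ ^ 2 ≠ 0 := by positivity
  simp only [neg_mul, div_eq_zero_iff, neg_eq_zero, mul_eq_zero, false_or, or_self, or_false, *]

theorem norm_mobius_sub_imageCenter_lt_iff {ν α z : ℂ} {r : ℝ} (hν : ν ≠ 0) (hr : 0 ≤ r)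
    (hz : z + 1 ≠ 0) (he : r ^ 2 - ‖1 + α‖ ^ 2 ≠ 0) (hzα : r < ‖z - α‖) :
    ‖ν ^ 2 * z / (z + 1) - imageCenter ν α r‖ < imageRadius ν α r ↔ ‖1 + α‖ < r := by
  rw [← sq_lt_sq₀ (norm_nonneg _) (imageRadius_nonneg ν α r hr), ← sub_neg,
    norm_mobius_sub_imageCenter_sq_sub_sq ν α z r hz he, neg_mul, neg_div, neg_lt_zero,
    div_pos_iff_of_pos_left, mul_pos_iff_of_pos_right, sub_pos, sq_lt_sq₀ (norm_nonneg _) hr]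
  · positivity
  · have : 0 < ‖z - α‖ ^ 2 - r ^ 2 := by nlinarith
    positivity

theorem norm_sq_sub_imageCenter (ν α : ℂ) (r : ℝ) (he : r ^ 2 - ‖1 + α‖ ^ 2 ≠ 0) :
    ‖ν ^ 2 - imageCenter ν α r‖ = ‖ν‖ ^ 2 * ‖1 + α‖ / |r ^ 2 - ‖1 + α‖ ^ 2| := by
  have he' : (r : ℂ) ^ 2 - (‖1 + α‖ : ℂ) ^ 2 ≠ 0 := by exact_mod_cast he
  have hsub : ν ^ 2 - imageCenter ν α r =
      -(ν ^ 2 * conj (1 + α)) / ((r : ℂ) ^ 2 - (‖1 + α‖ : ℂ) ^ 2) := by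
    rw [imageCenter, eq_div_iff he', sub_mul, div_mul_cancel₀ _ he', ← mul_conj', ← mul_conj',
      map_add, map_one]
    ring
  rw [hsub, norm_div, norm_neg, norm_mul, norm_pow, norm_conj, norm_ofReal_sq_sub_ofReal_sq]

theorem exists_mobius_eq {ν w : ℂ} (hν : ν ≠ 0) (hw : w ≠ ν ^ 2) :
    ∃ z : ℂ, z + 1 ≠ 0 ∧ ν ^ 2 * z / (z + 1) = w := by
  have hw' : ν ^ 2 - w ≠ 0 := sub_ne_zero.2 hw.symm
  have hz : w / (ν ^ 2 - w) + 1 = ν ^ 2 / (ν ^ 2 - w) := by field_simp; ring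
  refine ⟨w / (ν ^ 2 - w), by rw [hz]; positivity, ?_⟩
  rw [hz]
  field_simp

theorem norm_sq_sub_imageCenter_ne_imageRadius {ν α : ℂ} {r : ℝ} (hν : ν ≠ 0)
    (hne : r ≠ ‖1 + α‖) (he : r ^ 2 - ‖1 + α‖ ^ 2 ≠ 0) :
    ‖ν ^ 2 - imageCenter ν α r‖ ≠ imageRadius ν α r := by
  rw [norm_sq_sub_imageCenter ν α r he, imageRadius, mul_comm r, Ne,
    div_left_inj' (abs_ne_zero.2 he), mul_right_inj' (by positivity)]
  exact hne.symm

theorem add_one_ne_zero_of_norm_sub_ne {z α : ℂ} (h : ‖z - α‖ ≠ ‖1 + α‖) : z + 1 ≠ 0 := by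
  intro hz
  rw [eq_neg_of_add_eq_zero_left hz, ← norm_neg, neg_sub, sub_neg_eq_add, add_comm] at h
  exact h rfl

theorem circle_image_under_S (ν α : ℂ) (hν : ν ≠ 0) (r : ℝ) (hr : 0 < r)
    (hne : r ≠ ‖1 + α‖)
    (β : ℂ) (ρ : ℝ)
    (hβ : β = ν ^ 2 * ((r : ℂ) ^ 2 - α - (‖α‖ : ℂ) ^ 2) /
      ((r : ℂ) ^ 2 - (‖1 + α‖ : ℂ) ^ 2))
    (hρ : ρ = r * ‖ν‖ ^ 2 / |r ^ 2 - ‖1 + α‖ ^ 2|) :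
    ((fun z : ℂ => ν ^ 2 * z / (z + 1)) '' {z : ℂ | ‖z - α‖ = r} =
      {z : ℂ | ‖z - β‖ = ρ}) ∧
    ((∀ z : ℂ, z ≠ -1 → ‖z - α‖ > r →
        ‖ν ^ 2 * z / (z + 1) - β‖ < ρ) ↔ ‖α + 1‖ < r) := by
  change β = imageCenter ν α r at hβ
  change ρ = imageRadius ν α r at hρ
  subst hβ hρ
  have he : r ^ 2 - ‖1 + α‖ ^ 2 ≠ 0 :=
    sub_ne_zero.2 fun h => hne ((sq_eq_sq₀ hr.le (norm_nonneg _)).1 h)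
  rw [add_comm α 1]
  refine ⟨Set.ext fun w => ⟨?_, fun hw => ?_⟩, ⟨fun H => ?_, fun h z hz hzα => ?_⟩⟩
  · rintro ⟨z, hz, rfl⟩
    have hz₁ := add_one_ne_zero_of_norm_sub_ne (hz ▸ hne)
    exact (norm_mobius_sub_imageCenter_eq_iff hν hr.le hz₁ he).2 hz
  · obtain ⟨z, hz, rfl⟩ := exists_mobius_eq (w := w) hν
      (by rintro rfl; exact norm_sq_sub_imageCenter_ne_imageRadius hν hne he hw)
    exact ⟨z, (norm_mobius_sub_imageCenter_eq_iff hν hr.le hz he).1 hw, rfl⟩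
  · have ht := norm_nonneg (1 + α)
    set z := α + ((r + ‖1 + α‖ + 1 : ℝ) : ℂ)
    have hzα : ‖z - α‖ = r + ‖1 + α‖ + 1 := by
      rw [add_sub_cancel_left, norm_real, Real.norm_of_nonneg (by positivity)]
    have hz := add_one_ne_zero_of_norm_sub_ne (z := z) (by rw [hzα]; linarith)
    refine (norm_mobius_sub_imageCenter_lt_iff hν hr.le hz he (by rw [hzα]; linarith)).1 ?_
    exact H z (fun h => hz (by rw [h, neg_add_cancel])) (by rw [hzα]; linarith)
  · exact (norm_mobius_sub_imageCenter_lt_iff hν hr.le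
      (fun h => hz (eq_neg_of_add_eq_zero_left h)) he hzα).2 h
end

section
/- Let T(z) = z + 2λ with λ = |λ|e^{iω}, 0 ≤ ω ≤ π/2, λ ≠ 0, and for n ∈ ℤ and φ ∈ (-π/2, π/2) consider the family of circles Cₙ± = {z : |z ± e^{iφ}/cos φ + 2λn| = 1/cos φ}. There exists φ such that all these circles have pairwise disjoint interiors if and only if (|λ| ≥ 1 and π/3 ≤ ω ≤ π/2) or (Re(λ e^{-iπ/3}) ≥ 1 and 0 ≤ ω ≤ π/3). -/
/-!
Two balls of radius `ρ` are disjoint iff their centres are at least `2ρ` apart. For the balls of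
radius `‖c‖` centred at `±c - 2nλ` this reduces, since `‖c - kλ‖ ≥ |k| ‖λ‖ - ‖c‖`, to the
nearest-neighbour conditions `‖c‖ ≤ ‖λ‖` and `‖c‖ ≤ ‖c ∓ λ‖`. For `c = e^{iφ}/cos φ = 1 + i tan φ`
and `λ = r e^{iω}` these read `1 ≤ r cos φ` and `2 |cos (ω - φ)| ≤ r cos φ`.

Such a `φ` exists when `π/3 ≤ ω` (take `φ = 0`) or when `r cos (ω - π/3) ≥ 1` (take
`φ = ω - π/3`). Conversely, for `ω ≤ π/3` the vector `1` is a nonnegative combination of `e^{iω}`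
and `e^{i(ω - π/3)}`, the normals of the two constraints at the corner `r e^{i(ω - π/3)}` of the
region they cut out for `c`; pairing `c` with this combination gives `1 = Re c ≤ r cos (ω - π/3)`.
-/

open Real Metric

section Chain

variable {E : Type*} [NormedAddCommGroup E] [NormedSpace ℝ E]

lemma disjoint_ball_ball_iff_two_mul_le_dist (x y : E) (ρ : ℝ) :
    Disjoint (ball x ρ) (ball y ρ) ↔ 2 * ρ ≤ dist x y := by
  rcases le_or_gt ρ 0 with hρ | hρ
  · simp only [ball_eq_empty.2 hρ, disjoint_self, Set.bot_eq_empty, true_iff]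
    linarith [dist_nonneg (x := x) (y := y)]
  · rw [disjoint_ball_ball_iff hρ hρ, two_mul]

lemma norm_le_norm_zsmul {c l : E} (hl : ‖c‖ ≤ ‖l‖) {k : ℤ} (hk : k ≠ 0) :
    ‖c‖ ≤ ‖k • l‖ := by
  rw [norm_zsmul ℝ, Real.norm_eq_abs, ← Int.cast_abs]
  have : (1 : ℝ) ≤ |k| := by exact_mod_cast Int.one_le_abs hk
  nlinarith [norm_nonneg l]

lemma norm_le_norm_sub_zsmul {c l : E} (hl : ‖c‖ ≤ ‖l‖) (hsub : ‖c‖ ≤ ‖c - l‖)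
    (hadd : ‖c‖ ≤ ‖c + l‖) (k : ℤ) : ‖c‖ ≤ ‖c - k • l‖ := by
  rcases le_or_gt |k| 1 with hk | hk
  · obtain rfl | rfl | rfl : k = -1 ∨ k = 0 ∨ k = 1 := by have := abs_le.1 hk; omega
    all_goals simp [hsub, hadd]
  · have hk' : (2 : ℝ) ≤ ‖(k : ℝ)‖ := by
      rw [Real.norm_eq_abs, ← Int.cast_abs]; exact_mod_cast hk
    calc ‖c‖ ≤ ‖(k : ℝ)‖ * ‖l‖ - ‖c‖ := by nlinarith [norm_nonneg c]
      _ = ‖k • l‖ - ‖c‖ := by rw [norm_zsmul ℝ]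
      _ ≤ ‖c - k • l‖ := by linarith [norm_sub_norm_le (k • l) c, norm_sub_rev (k • l) c]

lemma pairwise_disjoint_chain_balls_iff (c l : E) :
    (∀ (n m : ℤ) (s t : Bool), (n, s) ≠ (m, t) →
        Disjoint (ball ((if s then -c else c) - (2 * n) • l) ‖c‖)
          (ball ((if t then -c else c) - (2 * m) • l) ‖c‖)) ↔
      ‖c‖ ≤ ‖l‖ ∧ ‖c‖ ≤ ‖c - l‖ ∧ ‖c‖ ≤ ‖c + l‖ := by
  have twice {x : E} (y : E) (hxy : x = (2 : ℝ) • y) : 2 * ‖c‖ ≤ ‖x‖ ↔ ‖c‖ ≤ ‖y‖ := by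
    rw [hxy, norm_smul, Real.norm_two, mul_le_mul_iff_right₀ two_pos]
  simp only [disjoint_ball_ball_iff_two_mul_le_dist, dist_eq_norm]
  constructor
  · intro H
    refine ⟨?_, ?_, ?_⟩
    · exact (twice l (by module)).1 (H 0 1 false false (by simp))
    · exact (twice (c - l) (by simp only [Bool.false_eq_true, ↓reduceIte]; module)).1
        (H 1 0 false true (by simp))
    · exact (twice (c + l) (by simp only [Bool.false_eq_true, ↓reduceIte]; module)).1
        (H 0 1 false true (by simp))
  · rintro ⟨hl, hsub, hadd⟩ n m s t hne
    cases s <;> cases t <;> simp only [Bool.false_eq_true, if_true, if_false, ne_eq,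
      Prod.mk.injEq, and_true, and_false, not_false_eq_true] at hne ⊢
    · exact (twice ((m - n) • l) (by module)).2
        (norm_le_norm_zsmul hl (sub_ne_zero.2 (Ne.symm hne)))
    · exact (twice (c - (n - m) • l) (by module)).2 (norm_le_norm_sub_zsmul hl hsub hadd _)
    · exact (twice (-(c - (m - n) • l)) (by module)).2
        (by rw [norm_neg]; exact norm_le_norm_sub_zsmul hl hsub hadd _)
    · exact (twice ((m - n) • l) (by module)).2
        (norm_le_norm_zsmul hl (sub_ne_zero.2 (Ne.symm hne)))

end Chain

lemma norm_le_norm_sub_and_norm_add_iff {F : Type*} [NormedAddCommGroup F]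
    [InnerProductSpace ℝ F] (x y : F) :
    ‖x‖ ≤ ‖x - y‖ ∧ ‖x‖ ≤ ‖x + y‖ ↔ 2 * |inner ℝ x y| ≤ ‖y‖ ^ 2 := by
  rw [← abs_two, ← abs_mul, abs_le, ← sq_le_sq₀ (norm_nonneg x) (norm_nonneg _),
    ← sq_le_sq₀ (norm_nonneg x) (norm_nonneg _), norm_sub_sq_real, norm_add_sq_real]
  constructor <;> rintro ⟨h₁, h₂⟩ <;> constructor <;> linarith

section Circles

open scoped ComplexConjugate

noncomputable def circleCenter (φ : ℝ) : ℂ := Complex.exp (φ * Complex.I) / (cos φ : ℂ)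

lemma norm_circleCenter {φ : ℝ} (hφ : 0 < cos φ) : ‖circleCenter φ‖ = 1 / cos φ := by
  rw [circleCenter, norm_div, Complex.norm_exp_ofReal_mul_I, Complex.norm_real,
    Real.norm_of_nonneg hφ.le]

lemma inner_circleCenter (φ r ω : ℝ) :
    inner ℝ (circleCenter φ) (r * Complex.exp (ω * Complex.I)) =
      r * cos (ω - φ) / cos φ := by
  have : r * Complex.exp (ω * Complex.I) * conj (circleCenter φ)
      = ((r / cos φ : ℝ) : ℂ) * Complex.exp ((ω - φ : ℝ) * Complex.I) := by
    rw [circleCenter, map_div₀, ← Complex.exp_conj, map_mul, Complex.conj_ofReal,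
      Complex.conj_ofReal, Complex.conj_I, mul_neg, Complex.exp_neg]
    push_cast
    rw [sub_mul, Complex.exp_sub]
    ring
  rw [Complex.inner, this, Complex.re_ofReal_mul, Complex.exp_ofReal_mul_I_re]
  ring

lemma circleCenter_chain_condition_iff {l : ℂ} {r ω φ : ℝ} (hr : 0 < r)
    (hl : l = r * Complex.exp (ω * Complex.I)) (hφ : 0 < cos φ) :
    ‖circleCenter φ‖ ≤ ‖l‖ ∧ ‖circleCenter φ‖ ≤ ‖circleCenter φ - l‖ ∧
        ‖circleCenter φ‖ ≤ ‖circleCenter φ + l‖ ↔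
      1 ≤ r * cos φ ∧ 2 * |cos (ω - φ)| ≤ r * cos φ := by
  subst hl
  have hnorm : ‖(r : ℂ) * Complex.exp (ω * Complex.I)‖ = r := by simp [hr.le]
  rw [norm_le_norm_sub_and_norm_add_iff, inner_circleCenter, norm_circleCenter hφ, hnorm,
    div_le_iff₀ hφ, abs_div, abs_mul, abs_of_pos hr, abs_of_pos hφ, mul_div_assoc',
    div_le_iff₀ hφ]
  refine and_congr_right fun _ => ⟨fun h => ?_, fun h => ?_⟩ <;> nlinarith

end Circles

-- `sin a • 1 = sin (a - ω) • e^{iω} + sin ω • e^{i(ω - a)}`, paired with `e^{iφ}`.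
lemma sin_mul_cos_eq (a ω φ : ℝ) :
    sin a * cos φ = sin (a - ω) * cos (ω - φ) + sin ω * cos (ω - a - φ) := by
  simp only [sin_sub, cos_sub]
  linear_combination -(sin a * cos φ) * sin_sq_add_cos_sq ω

lemma one_le_mul_cos_sub_pi_div_three {r ω φ : ℝ} (hω₀ : 0 ≤ ω) (hω : ω ≤ π / 3)
    (hφ : 0 < cos φ) (h₁ : 1 ≤ r * cos φ) (h₂ : 2 * cos (ω - φ) ≤ r * cos φ) :
    1 ≤ r * cos (ω - π / 3) := by
  have hα : 0 ≤ sin (π / 3 - ω) := sin_nonneg_of_nonneg_of_le_pi (by linarith) (by linarith)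
  have hβ : 0 ≤ sin ω := sin_nonneg_of_nonneg_of_le_pi hω₀ (by linarith)
  have hcorner : sin (π / 3) * cos (ω - π / 3) = sin (π / 3 - ω) / 2 + sin ω := by
    rw [sin_mul_cos_eq _ ω, sub_sub_cancel, sub_self, cos_pi_div_three, cos_zero]; ring
  have key : sin (π / 3) * cos φ * 1 ≤ sin (π / 3) * cos φ * (r * cos (ω - π / 3)) :=
    calc sin (π / 3) * cos φ * 1
        = sin (π / 3 - ω) * cos (ω - φ) + sin ω * cos (ω - π / 3 - φ) := by
          rw [mul_one, sin_mul_cos_eq _ ω]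
      _ ≤ sin (π / 3 - ω) * (r * cos φ / 2) + sin ω * (r * cos φ) := by
          gcongr
          · linarith
          · linarith [cos_le_one (ω - π / 3 - φ)]
      _ = sin (π / 3) * cos φ * (r * cos (ω - π / 3)) := by
          linear_combination (-(r * cos φ)) * hcorner
  have hs : 0 < sin (π / 3) := by rw [sin_pi_div_three]; positivity
  exact le_of_mul_le_mul_left key (by positivity)

lemma exists_angle_chain_condition_iff {r ω : ℝ} (hω₀ : 0 ≤ ω) (hω₁ : ω ≤ π / 2) :
    (∃ φ, -(π / 2) < φ ∧ φ < π / 2 ∧ 1 ≤ r * cos φ ∧ 2 * |cos (ω - φ)| ≤ r * cos φ) ↔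
      (1 ≤ r ∧ π / 3 ≤ ω) ∨ (1 ≤ r * cos (ω - π / 3) ∧ ω ≤ π / 3) := by
  constructor
  · rintro ⟨φ, hφ₁, hφ₂, h₁, h₂⟩
    have hφ : 0 < cos φ := cos_pos_of_mem_Ioo ⟨hφ₁, hφ₂⟩
    rcases le_or_gt (π / 3) ω with hω | hω
    · exact Or.inl ⟨by nlinarith [cos_le_one φ], hω⟩
    · exact Or.inr ⟨one_le_mul_cos_sub_pi_div_three hω₀ hω.le hφ h₁
        (le_trans (by linarith [le_abs_self (cos (ω - φ))]) h₂), hω.le⟩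
  · rintro (⟨hr, hω⟩ | ⟨hr, hω⟩)
    · have hcos₀ : 0 ≤ cos ω := cos_nonneg_of_mem_Icc ⟨by linarith [pi_pos], hω₁⟩
      have hcos₁ : cos ω ≤ 1 / 2 := by
        rw [← cos_pi_div_three]
        exact cos_le_cos_of_nonneg_of_le_pi (by positivity) (by linarith) hω
      refine ⟨0, by linarith [pi_pos], by linarith [pi_pos], by simpa using hr, ?_⟩
      rw [sub_zero, cos_zero, mul_one, abs_of_nonneg hcos₀]
      linarith
    · refine ⟨ω - π / 3, by linarith [pi_pos], by linarith [pi_pos], hr, ?_⟩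
      rw [sub_sub_cancel, cos_pi_div_three, abs_of_pos one_half_pos]
      linarith

theorem infinite_circle_chain_disjoint (l : ℂ) (hl : l ≠ 0) (ω : ℝ)
    (hω₀ : 0 ≤ ω) (hω₁ : ω ≤ π / 2)
    (hrep : l = (‖l‖ : ℂ) * Complex.exp (ω * Complex.I)) :
    (∃ φ : ℝ, -(π / 2) < φ ∧ φ < π / 2 ∧
      ∀ (n m : ℤ) (s t : Bool), (n, s) ≠ (m, t) →
        Disjoint
          (Metric.ball ((if s then -1 else 1) * Complex.exp (φ * Complex.I) / (Real.cos φ : ℂ)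
              - 2 * l * n) (1 / Real.cos φ))
          (Metric.ball ((if t then -1 else 1) * Complex.exp (φ * Complex.I) / (Real.cos φ : ℂ)
              - 2 * l * m) (1 / Real.cos φ))) ↔
      ((‖l‖ ≥ 1 ∧ π / 3 ≤ ω ∧ ω ≤ π / 2) ∨
        ((l * Complex.exp (-(π / 3 : ℝ) * Complex.I)).re ≥ 1 ∧ 0 ≤ ω ∧ ω ≤ π / 3)) := by
  obtain ⟨r, hr, rfl⟩ : ∃ r : ℝ, 0 < r ∧ l = r * Complex.exp (ω * Complex.I) :=
    ⟨‖l‖, norm_pos_iff.2 hl, hrep⟩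
  have hnorm : ‖(r : ℂ) * Complex.exp (ω * Complex.I)‖ = r := by simp [hr.le]
  have hrot : ((r : ℂ) * Complex.exp (ω * Complex.I) * Complex.exp (-(π / 3 : ℝ) * Complex.I)).re
      = r * Real.cos (ω - π / 3) := by
    rw [mul_assoc, ← Complex.exp_add, ← add_mul, ← Complex.ofReal_neg, ← Complex.ofReal_add,
      Complex.re_ofReal_mul, Complex.exp_ofReal_mul_I_re, ← sub_eq_add_neg]
  simp only [hnorm, hrot, hω₀, hω₁, and_true, true_and, ge_iff_le]
  rw [← exists_angle_chain_condition_iff hω₀ hω₁]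
  refine exists_congr fun φ => and_congr_right fun hφ₁ => and_congr_right fun hφ₂ => ?_
  have hφ : 0 < Real.cos φ := cos_pos_of_mem_Ioo ⟨hφ₁, hφ₂⟩
  have hcenter (n : ℤ) (s : Bool) :
      (if s then -1 else 1) * Complex.exp (φ * Complex.I) / (Real.cos φ : ℂ)
          - 2 * (r * Complex.exp (ω * Complex.I)) * n
        = (if s then -circleCenter φ else circleCenter φ)
          - (2 * n) • ((r : ℂ) * Complex.exp (ω * Complex.I)) := by
    cases s <;>
      simp only [Bool.false_eq_true, ↓reduceIte, circleCenter, zsmul_eq_mul, Int.cast_mul,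
        Int.cast_ofNat] <;> ring
  simp only [hcenter, ← norm_circleCenter hφ]
  exact (pairwise_disjoint_chain_balls_iff _ _).trans (circleCenter_chain_condition_iff hr rfl hφ)
end
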